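/- For every 2π-periodic continuous function u : ℝ → ℝ, the Dirichlet form E₂(u, u) := (∫₀^{2π} u)² + ∫₀^{2π} 𝒰₀(θ)²/w(θ) dθ + (1/2)·∫₀^{2π} u₀(θ)²/w(θ) dθ satisfies the coercivity estimate E₂(u, u) ≥ (1/2)·∫₀^{2π} u(θ)²/w(θ) dθ. -/

import Mathlib

noncomputable section

open MeasureTheory

/-- `Ψ₀(x)`: the non-disordered fixed-point function. -/
def Psi0 (x : ℝ) : ℝ :=
  (∫ θ in (0:ℝ)..(2 * Real.pi), Real.cos θ * Real.exp (x * Real.cos θ)) /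
    (∫ θ in (0:ℝ)..(2 * Real.pi), Real.exp (x * Real.cos θ))

/-- The potential `Φ(θ) = −2Kr₀·cos θ`. -/
def Phi (K r₀ θ : ℝ) : ℝ := -2 * K * r₀ * Real.cos θ

/-- The weight `w(θ) = exp(−Φ(θ))/∫₀^{2π} exp(−Φ)`. -/
def w (K r₀ θ : ℝ) : ℝ :=
  Real.exp (-Phi K r₀ θ) / (∫ u in (0:ℝ)..(2 * Real.pi), Real.exp (-Phi K r₀ u))

/-- The Fokker–Planck operator `Ã₂v = (1/2)v'' + (Kr₀ sin(θ) v)'`. -/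
def A2 (K r₀ : ℝ) (v : ℝ → ℝ) (θ : ℝ) : ℝ :=
  (1 / 2) * deriv (deriv v) θ + deriv (fun u => K * r₀ * Real.sin u * v u) θ

/-- The `2π`-periodic primitive of a zero-mean `a`, normalized so that
`∫₀^{2π} 𝒜/k = 0` for the weight `k`. -/
def prim (k a : ℝ → ℝ) (θ : ℝ) : ℝ :=
  (∫ u in (0:ℝ)..θ, a u) -
    (∫ s in (0:ℝ)..(2 * Real.pi), (∫ u in (0:ℝ)..s, a u) / k s) /
      (∫ s in (0:ℝ)..(2 * Real.pi), 1 / k s)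

/-- `v₀ = v − (∫₀^{2π} v)·w`, the zero-mean part of `v`. -/
def vz (K r₀ : ℝ) (v : ℝ → ℝ) (θ : ℝ) : ℝ :=
  v θ - (∫ u in (0:ℝ)..(2 * Real.pi), v u) * w K r₀ θ

/-- The weighted Sobolev inner product `⟨u, v⟩_{−1,w}`. -/
def pairW (K r₀ : ℝ) (u v : ℝ → ℝ) : ℝ :=
  (∫ θ in (0:ℝ)..(2 * Real.pi), u θ) * (∫ θ in (0:ℝ)..(2 * Real.pi), v θ) +
    ∫ θ in (0:ℝ)..(2 * Real.pi),
      prim (w K r₀) (vz K r₀ u) θ * prim (w K r₀) (vz K r₀ v) θ / w K r₀ θ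

/-!
Writing `c = ∫₀^{2π} u` and using `∫₀^{2π} w = 1`, the pointwise identity
`u²/w = (u - c w)²/w + 2 c u - c² w` integrates to `∫ u²/w = ∫ u₀²/w + c²`;
the estimate follows since the term in `𝒰₀` is nonnegative.
-/

theorem intervalIntegral.integral_sq_div_eq_integral_sub_sq_div_add_sq {a b : ℝ}
    {f g : ℝ → ℝ} (hf : Continuous f) (hg : Continuous g) (hg0 : ∀ x, g x ≠ 0)
    (hg1 : ∫ x in a..b, g x = 1) :
    ∫ x in a..b, f x ^ 2 / g x =
      (∫ x in a..b, (f x - (∫ y in a..b, f y) * g x) ^ 2 / g x) + (∫ x in a..b, f x) ^ 2 := by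
  set c := ∫ y in a..b, f y
  have hpoint : ∀ x, f x ^ 2 / g x = (f x - c * g x) ^ 2 / g x + 2 * c * f x - c ^ 2 * g x := by
    intro x
    field_simp [hg0 x]
    ring
  have hsq : Continuous fun x => (f x - c * g x) ^ 2 / g x :=
    ((hf.sub (continuous_const.mul hg)).pow 2).div hg hg0
  have hlin : Continuous fun x => 2 * c * f x := continuous_const.mul hf
  have hquad : Continuous fun x => c ^ 2 * g x := continuous_const.mul hg
  have hsum : Continuous fun x => (f x - c * g x) ^ 2 / g x + 2 * c * f x := hsq.add hlin
  simp_rw [hpoint]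
  rw [intervalIntegral.integral_sub (hsum.intervalIntegrable _ _)
      (hquad.intervalIntegrable _ _),
    intervalIntegral.integral_add (hsq.intervalIntegrable _ _) (hlin.intervalIntegrable _ _),
    intervalIntegral.integral_const_mul, intervalIntegral.integral_const_mul, hg1]
  ring

theorem continuous_exp_neg_Phi (K r₀ : ℝ) : Continuous fun θ => Real.exp (-Phi K r₀ θ) := by
  unfold Phi
  fun_prop

theorem integral_exp_neg_Phi_pos (K r₀ : ℝ) :
    0 < ∫ θ in (0:ℝ)..(2 * Real.pi), Real.exp (-Phi K r₀ θ) :=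
  intervalIntegral.intervalIntegral_pos_of_pos_on
    ((continuous_exp_neg_Phi K r₀).intervalIntegrable _ _) (fun _ _ => Real.exp_pos _)
    Real.two_pi_pos

theorem continuous_w (K r₀ : ℝ) : Continuous (w K r₀) :=
  (continuous_exp_neg_Phi K r₀).div_const _

theorem w_pos (K r₀ θ : ℝ) : 0 < w K r₀ θ :=
  div_pos (Real.exp_pos _) (integral_exp_neg_Phi_pos K r₀)

theorem integral_w (K r₀ : ℝ) : ∫ θ in (0:ℝ)..(2 * Real.pi), w K r₀ θ = 1 := by
  unfold w
  rw [intervalIntegral.integral_div]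
  exact div_self (integral_exp_neg_Phi_pos K r₀).ne'

theorem integral_sq_div_w_eq (K r₀ : ℝ) {u : ℝ → ℝ} (hu : Continuous u) :
    ∫ θ in (0:ℝ)..(2 * Real.pi), u θ ^ 2 / w K r₀ θ =
      (∫ θ in (0:ℝ)..(2 * Real.pi), vz K r₀ u θ ^ 2 / w K r₀ θ) +
        (∫ θ in (0:ℝ)..(2 * Real.pi), u θ) ^ 2 :=
  intervalIntegral.integral_sq_div_eq_integral_sub_sq_div_add_sq hu (continuous_w K r₀)
    (fun θ => (w_pos K r₀ θ).ne') (integral_w K r₀)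

theorem integral_sq_div_w_nonneg (K r₀ : ℝ) (f : ℝ → ℝ) :
    0 ≤ ∫ θ in (0:ℝ)..(2 * Real.pi), f θ ^ 2 / w K r₀ θ :=
  intervalIntegral.integral_nonneg Real.two_pi_pos.le
    fun θ _ => div_nonneg (sq_nonneg _) (w_pos K r₀ θ).le

theorem stmt13_general (K r₀ : ℝ)
    (u : ℝ → ℝ) (hu : Continuous u) :
    (1 / 2) * (∫ θ in (0:ℝ)..(2 * Real.pi), (u θ) ^ 2 / w K r₀ θ) ≤
      (∫ θ in (0:ℝ)..(2 * Real.pi), u θ) ^ 2 +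
        (∫ θ in (0:ℝ)..(2 * Real.pi), (prim (w K r₀) (vz K r₀ u) θ) ^ 2 / w K r₀ θ) +
        (1 / 2) * ∫ θ in (0:ℝ)..(2 * Real.pi), (vz K r₀ u θ) ^ 2 / w K r₀ θ := by
  rw [integral_sq_div_w_eq K r₀ hu]
  linarith [integral_sq_div_w_nonneg K r₀ (prim (w K r₀) (vz K r₀ u)),
    sq_nonneg (∫ θ in (0:ℝ)..(2 * Real.pi), u θ)]

/-- Coercivity of the Dirichlet form associated to the Fokker–Planck operator. -/
theorem stmt13 (K r₀ : ℝ) (hK : 1 < K) (hr₀ : 0 < r₀) (hfix : r₀ = Psi0 (2 * K * r₀))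
    (u : ℝ → ℝ) (hu : Continuous u) (hper : Function.Periodic u (2 * Real.pi)) :
    (1 / 2) * (∫ θ in (0:ℝ)..(2 * Real.pi), (u θ) ^ 2 / w K r₀ θ) ≤
      (∫ θ in (0:ℝ)..(2 * Real.pi), u θ) ^ 2 +
        (∫ θ in (0:ℝ)..(2 * Real.pi), (prim (w K r₀) (vz K r₀ u) θ) ^ 2 / w K r₀ θ) +
        (1 / 2) * ∫ θ in (0:ℝ)..(2 * Real.pi), (vz K r₀ u θ) ^ 2 / w K r₀ θ :=
  stmt13_general K r₀ u hu
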